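/- arXiv:math/0301058 — 5 statements merged into one kernel-verified Lean document; each statement's English description precedes it below -/
import Mathlib

section
/- Let R be an integral domain and χ : A_n → R a ring homomorphism with χ(q) = 0 and χ(e_{{1,…,n}}) invertible in R. Then the nonempty subsets I ⊆ {1,…,n} with χ(e_I) ≠ 0 form a chain ∅ ≠ I₁ ⊂ I₂ ⊂ ⋯ ⊂ I_r = {1,…,n} under inclusion; that is, any two nonempty subsets I, J with χ(e_I) ≠ 0 and χ(e_J) ≠ 0 satisfy I ⊆ J or J ⊆ I, and χ(e_{{1,…,n}}) ≠ 0. -/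
/-- Let `R` be an integral domain and `χ` a ring homomorphism from `A_n` to `R` with
`χ(q) = 0` and `χ(e_{{1,…,n}})` invertible.  Such a character is modelled by its
values `f I = χ(e_I)`, which satisfy `f ∅ = 1` and the specialized relations
`f I * f J = 0^{yz} * (f (I∪J) * f (I∩J))` (where `|I∩J| = x`, `|I| = x+y`,
`|J| = x+z`; note `0^0 = 1`).  Then `χ(e_{{1,…,n}}) ≠ 0` and the nonempty subsets
`I` with `χ(e_I) ≠ 0` form a chain under inclusion: any two such subsets `I, J`
satisfy `I ⊆ J` or `J ⊆ I`. -/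
theorem stmt_3 (n : ℕ) (R : Type*) [CommRing R] [IsDomain R]
    (f : Finset (Fin n) → R) (h0 : f ∅ = 1)
    (hrel : ∀ I J : Finset (Fin n),
      f I * f J =
        (0 : R) ^ ((I.card - (I ∩ J).card) * (J.card - (I ∩ J).card)) *
          (f (I ∪ J) * f (I ∩ J)))
    (hunit : IsUnit (f Finset.univ)) :
    f Finset.univ ≠ 0 ∧
      ∀ I J : Finset (Fin n), I.Nonempty → J.Nonempty →
        f I ≠ 0 → f J ≠ 0 → I ⊆ J ∨ J ⊆ I := by
  refine ⟨hunit.ne_zero, ?_⟩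
  intro I J _ _ hI hJ
  by_contra h
  push_neg at h
  obtain ⟨h1, h2⟩ := h
  have hIc : (I ∩ J).card < I.card :=
    Finset.card_lt_card ⟨Finset.inter_subset_left,
      fun hs => h1 fun x hx => Finset.mem_of_mem_inter_right (hs hx)⟩
  have hJc : (I ∩ J).card < J.card :=
    Finset.card_lt_card ⟨Finset.inter_subset_right,
      fun hs => h2 fun x hx => Finset.mem_of_mem_inter_left (hs hx)⟩
  have := hrel I J
  rw [zero_pow (Nat.mul_ne_zero (by omega) (by omega)), zero_mul] at this
  exact mul_ne_zero hI hJ this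
end

section
/- Conversely, given an integral domain R, a chain of nonempty subsets ∅ ≠ I₁ ⊂ I₂ ⊂ ⋯ ⊂ I_r = {1,…,n}, and nonzero elements x_{I₁},…,x_{I_r} ∈ R with x_{I_r} invertible, there exists a unique ring homomorphism χ : A_n → R with χ(q) = 0, χ(e_{I_j}) = x_{I_j} for all j, and χ(e_I) = 0 for every nonempty I not in the chain. -/
/-!
Over `q = 0` the relation `e_A e_B = q^{yz} e_{A∪B} e_{A∩B}` says that `e_A e_B = 0` unless
`A` and `B` are comparable, and is a tautology when they are. So any function on subsets whose
support, together with `∅`, is a chain satisfies all relations; the function equal to `1` at `∅`,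
to `x_j` at `I_j` and to `0` elsewhere is therefore a character, and the prescribed values pin
it down on every subset.
-/

open Finset Function

namespace Finset

variable {α : Type*} [DecidableEq α]

lemma card_sub_card_inter_mul_eq_zero_iff {A B : Finset α} :
    (#A - #(A ∩ B)) * (#B - #(A ∩ B)) = 0 ↔ A ⊆ B ∨ B ⊆ A := by
  rw [← card_sdiff, inter_comm, ← card_sdiff, mul_eq_zero, card_eq_zero, card_eq_zero,
    sdiff_eq_empty_iff_subset, sdiff_eq_empty_iff_subset]

lemma mul_eq_zero_pow_mul_of_comparable {R : Type*} [CommMonoidWithZero R]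
    {f : Finset α → R} (hf : ∀ A B, f A ≠ 0 → f B ≠ 0 → A ⊆ B ∨ B ⊆ A) (A B : Finset α) :
    f A * f B = (0 : R) ^ ((#A - #(A ∩ B)) * (#B - #(A ∩ B))) * (f (A ∪ B) * f (A ∩ B)) := by
  by_cases hAB : A ⊆ B ∨ B ⊆ A
  · rw [card_sub_card_inter_mul_eq_zero_iff.mpr hAB, pow_zero, one_mul]
    rcases hAB with hAB | hBA
    · rw [union_eq_right.mpr hAB, inter_eq_left.mpr hAB, mul_comm]
    · rw [union_eq_left.mpr hBA, inter_eq_right.mpr hBA]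
  · rw [zero_pow (mt card_sub_card_inter_mul_eq_zero_iff.mp hAB), zero_mul]
    by_cases hA : f A = 0
    · rw [hA, zero_mul]
    by_cases hB : f B = 0
    · rw [hB, mul_zero]
    exact absurd (hf A B hA hB) hAB

variable {ι R : Type*} [Zero R] [One R]

noncomputable def chainCharacter (I : ι → Finset α) (x : ι → R) : Finset α → R :=
  extend I x (Pi.single ∅ 1)

variable {I : ι → Finset α} {x : ι → R}

lemma chainCharacter_apply (hI : Injective I) (j : ι) : chainCharacter I x (I j) = x j :=
  hI.extend_apply x _ j

lemma chainCharacter_empty (hI : ∀ j, (I j).Nonempty) : chainCharacter I x ∅ = 1 := by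
  rw [chainCharacter, extend_apply' _ _ _ fun ⟨j, hj⟩ => (hI j).ne_empty hj, Pi.single_eq_same]

lemma chainCharacter_of_notMem {J : Finset α} (hJ : J.Nonempty) (hJI : ∀ j, J ≠ I j) :
    chainCharacter I x J = 0 := by
  rw [chainCharacter, extend_apply' _ _ _ fun ⟨j, hj⟩ => hJI j hj.symm,
    Pi.single_eq_of_ne hJ.ne_empty]

lemma eq_empty_or_mem_range_of_chainCharacter_ne_zero {J : Finset α}
    (hJ : chainCharacter I x J ≠ 0) : J = ∅ ∨ J ∈ Set.range I := by
  by_contra! h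
  exact hJ (chainCharacter_of_notMem h.1
    fun j hj => h.2 ⟨j, hj.symm⟩)

lemma comparable_of_chainCharacter_ne_zero [LinearOrder ι] (hI : Monotone I) (A B : Finset α)
    (hA : chainCharacter I x A ≠ 0) (hB : chainCharacter I x B ≠ 0) : A ⊆ B ∨ B ⊆ A := by
  rcases eq_empty_or_mem_range_of_chainCharacter_ne_zero hA with rfl | ⟨j, rfl⟩
  · exact .inl (empty_subset _)
  rcases eq_empty_or_mem_range_of_chainCharacter_ne_zero hB with rfl | ⟨k, rfl⟩
  · exact .inr (empty_subset _)
  exact (le_total j k).imp (hI ·) (hI ·)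

lemma eq_chainCharacter (hI : Injective I) (hne : ∀ j, (I j).Nonempty) {g : Finset α → R}
    (hg_empty : g ∅ = 1) (hg_chain : ∀ j, g (I j) = x j)
    (hg_zero : ∀ J : Finset α, J.Nonempty → (∀ j, J ≠ I j) → g J = 0) :
    g = chainCharacter I x := by
  funext J
  rcases J.eq_empty_or_nonempty with rfl | hJ
  · rw [hg_empty, chainCharacter_empty hne]
  by_cases hJI : ∃ j, J = I j
  · obtain ⟨j, rfl⟩ := hJI
    rw [hg_chain, chainCharacter_apply hI]
  · have hJI' : ∀ j, J ≠ I j := fun j hj => hJI ⟨j, hj⟩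
    rw [hg_zero J hJ hJI', chainCharacter_of_notMem hJ hJI']

end Finset

/-- A character `χ` of `A_n` with `χ(q) = 0` is encoded by its values `f I = χ(e_I)`. -/
theorem stmt_4_general (n r : ℕ) (hr : 0 < r) (R : Type*) [CommRing R]
    (I : Fin r → Finset (Fin n)) (hmono : StrictMono I)
    (hne : (I ⟨0, hr⟩).Nonempty)
    (x : Fin r → R) :
    ∃! f : Finset (Fin n) → R,
      f ∅ = 1 ∧
      (∀ A B : Finset (Fin n),
        f A * f B =
          (0 : R) ^ ((A.card - (A ∩ B).card) * (B.card - (A ∩ B).card)) *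
            (f (A ∪ B) * f (A ∩ B))) ∧
      (∀ j, f (I j) = x j) ∧
      (∀ J : Finset (Fin n), J.Nonempty → (∀ j, J ≠ I j) → f J = 0) := by
  have hIne : ∀ j, (I j).Nonempty := fun j => hne.mono (hmono.monotone (Nat.zero_le j.val))
  refine ⟨chainCharacter I x, ⟨chainCharacter_empty hIne,
    mul_eq_zero_pow_mul_of_comparable (comparable_of_chainCharacter_ne_zero hmono.monotone),
    chainCharacter_apply hmono.injective, fun _ => chainCharacter_of_notMem⟩, ?_⟩
  rintro g ⟨hg_empty, -, hg_chain, hg_zero⟩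
  exact eq_chainCharacter hmono.injective hIne hg_empty hg_chain hg_zero

/-- Conversely: given an integral domain `R`, a chain of nonempty subsets
`∅ ≠ I₁ ⊂ I₂ ⊂ ⋯ ⊂ I_r = {1,…,n}` and nonzero elements `x_{I₁},…,x_{I_r} ∈ R`
with `x_{I_r}` invertible, there is a unique ring homomorphism `χ : A_n → R` with
`χ(q) = 0`, `χ(e_{I_j}) = x_{I_j}` and `χ(e_I) = 0` for every nonempty `I` not in
the chain.  A character of `A_n` with `χ(q) = 0` is modelled by its values
`f I = χ(e_I)`, subject to `f ∅ = 1` and the specialized relations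
`f I * f J = 0^{yz} * (f (I∪J) * f (I∩J))`. -/
theorem stmt_4 (n r : ℕ) (hr : 0 < r) (R : Type*) [CommRing R] [IsDomain R]
    (I : Fin r → Finset (Fin n)) (hmono : StrictMono I)
    (hne : (I ⟨0, hr⟩).Nonempty) (htop : I ⟨r - 1, Nat.sub_lt hr one_pos⟩ = Finset.univ)
    (x : Fin r → R) (hx : ∀ j, x j ≠ 0)
    (hxu : IsUnit (x ⟨r - 1, Nat.sub_lt hr one_pos⟩)) :
    ∃! f : Finset (Fin n) → R,
      f ∅ = 1 ∧
      (∀ A B : Finset (Fin n),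
        f A * f B =
          (0 : R) ^ ((A.card - (A ∩ B).card) * (B.card - (A ∩ B).card)) *
            (f (A ∪ B) * f (A ∩ B))) ∧
      (∀ j, f (I j) = x j) ∧
      (∀ J : Finset (Fin n), J.Nonempty → (∀ j, J ≠ I j) → f J = 0) :=
  stmt_4_general n r hr R I hmono hne x
end

section
/- Let ∅ ≠ I₁ ⊂ ⋯ ⊂ I_r = {1,…,n} with |I_j| = t_j, and define e_i ∈ ℚ for i ∈ {1,…,n} by e_i = (t₁−1)/2 if i ∈ I₁, and e_i = (t_{j+1}+t_j−1)/2 if i ∈ I_{j+1}∖I_j for 1 ≤ j ≤ r−1. For any nonempty subset I ⊆ {1,…,n} with |I| = t, setting e_I = Σ_{i∈I} e_i, one has 2e_I ≥ t(t−1), with equality if and only if I is one of I₁,…,I_r. -/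
private lemma sum_const_val {n : ℕ} (D : Finset (Fin n)) (e : Fin n → ℚ) (c : ℚ)
    (h : ∀ i ∈ D, e i = c) : ∑ i ∈ D, e i = D.card * c := by
  rw [Finset.sum_congr rfl h, Finset.sum_const, nsmul_eq_mul]

private lemma aux_main (n : ℕ) : ∀ (r : ℕ) (I : Fin (r+1) → Finset (Fin n)),
    StrictMono I → (I ⟨0, Nat.succ_pos r⟩).Nonempty →
    ∀ e : Fin n → ℚ,
    (∀ i ∈ I ⟨0, Nat.succ_pos r⟩, e i = (((I ⟨0, Nat.succ_pos r⟩).card : ℚ) - 1) / 2) →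
    (∀ (j : ℕ) (h : j + 1 < r + 1), ∀ i ∈ I ⟨j+1, h⟩ \ I ⟨j, Nat.lt_of_succ_lt h⟩,
        e i = (((I ⟨j+1, h⟩).card : ℚ) + ((I ⟨j, Nat.lt_of_succ_lt h⟩).card : ℚ) - 1) / 2) →
    ∀ J : Finset (Fin n), J ⊆ I ⟨r, lt_add_one r⟩ → J.Nonempty →
      2 * (∑ i ∈ J, e i) ≥ (J.card : ℚ) * ((J.card : ℚ) - 1) ∧
      (2 * (∑ i ∈ J, e i) = (J.card : ℚ) * ((J.card : ℚ) - 1) ↔ ∃ j, J = I j) := by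
  intro r
  induction r with
  | zero =>
    intro I hmono hne e he0 heS J hJ hJne
    have hsum : ∑ i ∈ J, e i
        = J.card * ((((I ⟨0, Nat.succ_pos 0⟩).card : ℚ) - 1) / 2) :=
      sum_const_val _ _ _ fun i hi => he0 i (hJ hi)
    have ht1 : (1:ℚ) ≤ J.card := by exact_mod_cast hJne.card_pos
    have htc : (J.card:ℚ) ≤ (I ⟨0, Nat.succ_pos 0⟩).card := by
      exact_mod_cast Finset.card_le_card hJ
    refine ⟨by rw [hsum]; nlinarith, ?_, ?_⟩
    · intro h
      rw [hsum] at h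
      have hq : ((I ⟨0, Nat.succ_pos 0⟩).card : ℚ) = J.card := by nlinarith
      have hn : (I ⟨0, Nat.succ_pos 0⟩).card ≤ J.card := by exact_mod_cast le_of_eq hq
      exact ⟨⟨0, Nat.succ_pos 0⟩, Finset.eq_of_subset_of_card_le hJ hn⟩
    · rintro ⟨j, rfl⟩
      have hj : j = ⟨0, Nat.succ_pos 0⟩ := Fin.ext (by omega)
      rw [hj] at hsum ⊢
      rw [hsum]; ring
  | succ r' ih =>
    intro I hmono hne e he0 heS J hJ hJne
    have hrlt : r' < r' + 2 := by omega
    have hBA : I ⟨r', hrlt⟩ ⊆ I ⟨r'+1, lt_add_one (r'+1)⟩ :=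
      (hmono (Fin.mk_lt_mk.mpr (lt_add_one r'))).le
    have hsplit : ∑ i ∈ J ∩ I ⟨r', hrlt⟩, e i + ∑ i ∈ J \ I ⟨r', hrlt⟩, e i
        = ∑ i ∈ J, e i := Finset.sum_inter_add_sum_sdiff _ _ _
    have hDval : ∀ i ∈ J \ I ⟨r', hrlt⟩,
        e i = (((I ⟨r'+1, lt_add_one (r'+1)⟩).card : ℚ) + ((I ⟨r', hrlt⟩).card : ℚ) - 1) / 2 := by
      intro i hi
      rcases Finset.mem_sdiff.mp hi with ⟨hiJ, hiB⟩
      exact heS r' (by omega) i (Finset.mem_sdiff.mpr ⟨hJ hiJ, hiB⟩)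
    have hkey : 2 * ∑ i ∈ J, e i = 2 * ∑ i ∈ J ∩ I ⟨r', hrlt⟩, e i
        + ((J \ I ⟨r', hrlt⟩).card : ℚ)
          * (((I ⟨r'+1, lt_add_one (r'+1)⟩).card : ℚ) + ((I ⟨r', hrlt⟩).card : ℚ) - 1) := by
      rw [← hsplit, sum_const_val _ _ _ hDval]; ring
    have hcard : (J ∩ I ⟨r', hrlt⟩).card + (J \ I ⟨r', hrlt⟩).card = J.card :=
      Finset.card_inter_add_card_sdiff J _
    have htq : (J.card : ℚ) = ((J ∩ I ⟨r', hrlt⟩).card : ℚ) + ((J \ I ⟨r', hrlt⟩).card : ℚ) := by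
      exact_mod_cast hcard.symm
    have htT : (J.card : ℚ) ≤ ((I ⟨r'+1, lt_add_one (r'+1)⟩).card : ℚ) := by
      exact_mod_cast Finset.card_le_card hJ
    have hxs : ((J ∩ I ⟨r', hrlt⟩).card : ℚ) ≤ ((I ⟨r', hrlt⟩).card : ℚ) := by
      exact_mod_cast Finset.card_le_card (Finset.inter_subset_right)
    have hiden : 2 * ∑ i ∈ J, e i - (J.card : ℚ) * ((J.card : ℚ) - 1)
        = (2 * ∑ i ∈ J ∩ I ⟨r', hrlt⟩, e i
            - ((J ∩ I ⟨r', hrlt⟩).card : ℚ) * (((J ∩ I ⟨r', hrlt⟩).card : ℚ) - 1))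
          + ((J \ I ⟨r', hrlt⟩).card : ℚ)
            * (((I ⟨r'+1, lt_add_one (r'+1)⟩).card : ℚ) + ((I ⟨r', hrlt⟩).card : ℚ)
              - (J.card : ℚ) - ((J ∩ I ⟨r', hrlt⟩).card : ℚ)) := by
      linear_combination hkey - ((J.card : ℚ) + ((J ∩ I ⟨r', hrlt⟩).card : ℚ) - 1) * htq
    rcases Nat.eq_zero_or_pos (J ∩ I ⟨r', hrlt⟩).card with hx0 | hxpos
    · -- J misses I_{r'} entirely
      have hJ'e : J ∩ I ⟨r', hrlt⟩ = ∅ := Finset.card_eq_zero.mp hx0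
      have hs1 : (1:ℚ) ≤ ((I ⟨r', hrlt⟩).card : ℚ) := by
        have : (I ⟨0, Nat.succ_pos (r'+1)⟩) ⊆ I ⟨r', hrlt⟩ :=
          hmono.monotone (Fin.mk_le_mk.mpr (Nat.zero_le r'))
        exact_mod_cast Finset.card_pos.mpr (hne.mono this)
      have ht1 : (1:ℚ) ≤ (J.card : ℚ) := by exact_mod_cast hJne.card_pos
      have hx0q : ((J ∩ I ⟨r', hrlt⟩).card : ℚ) = 0 := by rw [hJ'e]; simp
      have hSz : 2 * ∑ i ∈ J ∩ I ⟨r', hrlt⟩, e i = 0 := by rw [hJ'e]; simp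
      constructor
      · nlinarith [hiden]
      constructor
      · intro h; exfalso; nlinarith [hiden]
      · rintro ⟨j, rfl⟩
        obtain ⟨i0, hi0⟩ := hne
        have hi0J : i0 ∈ I j := hmono.monotone (Fin.le_def.mpr (Nat.zero_le _)) hi0
        have hi0B : i0 ∈ I ⟨r', hrlt⟩ :=
          hmono.monotone (Fin.mk_le_mk.mpr (Nat.zero_le r')) hi0
        have : i0 ∈ I j ∩ I ⟨r', hrlt⟩ := Finset.mem_inter.mpr ⟨hi0J, hi0B⟩
        rw [hJ'e] at this
        simp at this
    · have hJ'ne : (J ∩ I ⟨r', hrlt⟩).Nonempty := Finset.card_pos.mp hxpos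
      obtain ⟨IH1, IH2⟩ := ih (fun j => I j.castSucc)
        (fun a b h => hmono (Fin.castSucc_lt_castSucc_iff.mpr h)) hne e he0
        (fun j h i hi => heS j (by omega) i hi)
        (J ∩ I ⟨r', hrlt⟩) Finset.inter_subset_right hJ'ne
      have hE2 : ((J \ I ⟨r', hrlt⟩).card : ℚ)
          * (((I ⟨r'+1, lt_add_one (r'+1)⟩).card : ℚ) + ((I ⟨r', hrlt⟩).card : ℚ)
            - (J.card : ℚ) - ((J ∩ I ⟨r', hrlt⟩).card : ℚ)) ≥ 0 :=
        mul_nonneg (Nat.cast_nonneg _) (by linarith)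
      constructor
      · linarith [hiden, IH1, hE2]
      constructor
      · intro h
        have hE1z : 2 * ∑ i ∈ J ∩ I ⟨r', hrlt⟩, e i
            = ((J ∩ I ⟨r', hrlt⟩).card : ℚ) * (((J ∩ I ⟨r', hrlt⟩).card : ℚ) - 1) := by
          linarith [hiden, IH1, hE2]
        have hE2z : ((J \ I ⟨r', hrlt⟩).card : ℚ)
            * (((I ⟨r'+1, lt_add_one (r'+1)⟩).card : ℚ) + ((I ⟨r', hrlt⟩).card : ℚ)
              - (J.card : ℚ) - ((J ∩ I ⟨r', hrlt⟩).card : ℚ)) = 0 := by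
          linarith [hiden, IH1]
        obtain ⟨j', hj'⟩ := IH2.mp hE1z
        rcases mul_eq_zero.mp hE2z with hd0 | hTs
        · have hd0' : (J \ I ⟨r', hrlt⟩).card = 0 := by exact_mod_cast hd0
          have hsub : J ⊆ I ⟨r', hrlt⟩ :=
            Finset.sdiff_eq_empty_iff_subset.mp (Finset.card_eq_zero.mp hd0')
          have hinter : J ∩ I ⟨r', hrlt⟩ = J := Finset.inter_eq_left.mpr hsub
          rw [hinter] at hj'
          exact ⟨j'.castSucc, hj'⟩
        · have hTt : ((I ⟨r'+1, lt_add_one (r'+1)⟩).card : ℚ) = (J.card : ℚ) := by linarith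
          have hTt' : (I ⟨r'+1, lt_add_one (r'+1)⟩).card ≤ J.card := by
            exact_mod_cast le_of_eq hTt
          exact ⟨⟨r'+1, lt_add_one (r'+1)⟩, Finset.eq_of_subset_of_card_le hJ hTt'⟩
      · rintro ⟨j, hJj⟩
        by_cases hjv : j.val ≤ r'
        · have hsubB : I j ⊆ I ⟨r', hrlt⟩ := hmono.monotone (Fin.le_def.mpr (by simpa using hjv))
          have hsub : J ⊆ I ⟨r', hrlt⟩ := hJj ▸ hsubB
          have hinter : J ∩ I ⟨r', hrlt⟩ = J := Finset.inter_eq_left.mpr hsub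
          have hDe : J \ I ⟨r', hrlt⟩ = ∅ := Finset.sdiff_eq_empty_iff_subset.mpr hsub
          have hmem : J ∩ I ⟨r', hrlt⟩ = (fun k : Fin (r'+1) => I k.castSucc) ⟨j.val, by omega⟩ := by
            rw [hinter, hJj]
            exact congrArg I (Fin.ext rfl)
          have hSx := IH2.mpr ⟨⟨j.val, by omega⟩, hmem⟩
          have hd0 : ((J \ I ⟨r', hrlt⟩).card : ℚ) = 0 := by rw [hDe]; simp
          have hz : ((J \ I ⟨r', hrlt⟩).card : ℚ)
              * (((I ⟨r'+1, lt_add_one (r'+1)⟩).card : ℚ) + ((I ⟨r', hrlt⟩).card : ℚ)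
                - (J.card : ℚ) - ((J ∩ I ⟨r', hrlt⟩).card : ℚ)) = 0 := by
            rw [hd0, zero_mul]
          linarith [hiden, hSx, hz]
        · have hjv' : j.val = r' + 1 := by omega
          have hjA : I j = I ⟨r'+1, lt_add_one (r'+1)⟩ := congrArg I (Fin.ext hjv')
          have hBsub : I ⟨r', hrlt⟩ ⊆ J := by rw [hJj, hjA]; exact hBA
          have hinter : J ∩ I ⟨r', hrlt⟩ = I ⟨r', hrlt⟩ := Finset.inter_eq_right.mpr hBsub
          have hmem : J ∩ I ⟨r', hrlt⟩ = (fun k : Fin (r'+1) => I k.castSucc) ⟨r', lt_add_one r'⟩ := by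
            rw [hinter]; exact congrArg I (Fin.ext rfl)
          have hSx := IH2.mpr ⟨⟨r', lt_add_one r'⟩, hmem⟩
          have hxq : ((J ∩ I ⟨r', hrlt⟩).card : ℚ) = ((I ⟨r', hrlt⟩).card : ℚ) := by
            rw [hinter]
          have htq2 : (J.card : ℚ) = ((I ⟨r'+1, lt_add_one (r'+1)⟩).card : ℚ) := by
            rw [hJj, hjA]
          have hz : ((J \ I ⟨r', hrlt⟩).card : ℚ)
              * (((I ⟨r'+1, lt_add_one (r'+1)⟩).card : ℚ) + ((I ⟨r', hrlt⟩).card : ℚ)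
                - (J.card : ℚ) - ((J ∩ I ⟨r', hrlt⟩).card : ℚ)) = 0 := by
            rw [show (((I ⟨r'+1, lt_add_one (r'+1)⟩).card : ℚ) + ((I ⟨r', hrlt⟩).card : ℚ)
                - (J.card : ℚ) - ((J ∩ I ⟨r', hrlt⟩).card : ℚ)) = 0 from by linarith, mul_zero]
          linarith [hiden, hSx, hz]


/-- Let `∅ ≠ I₁ ⊂ ⋯ ⊂ I_r = {1,…,n}` with `|I_j| = t_j`, and let `e_i ∈ ℚ` be
defined by `e_i = (t₁−1)/2` for `i ∈ I₁` and `e_i = (t_{j+1}+t_j−1)/2` for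
`i ∈ I_{j+1}∖I_j`.  For any nonempty `I ⊆ {1,…,n}` with `|I| = t`, setting
`e_I = Σ_{i∈I} e_i`, one has `2 e_I ≥ t(t−1)`, with equality iff `I` is one of
`I₁,…,I_r`. -/
theorem stmt_6 (n r : ℕ) (hr : 0 < r) (I : Fin r → Finset (Fin n))
    (hmono : StrictMono I)
    (hne : (I ⟨0, hr⟩).Nonempty) (htop : I ⟨r - 1, Nat.sub_lt hr one_pos⟩ = Finset.univ)
    (e : Fin n → ℚ)
    (he0 : ∀ i ∈ I ⟨0, hr⟩, e i = (((I ⟨0, hr⟩).card : ℚ) - 1) / 2)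
    (heS : ∀ (j : ℕ) (h : j + 1 < r),
      ∀ i ∈ I ⟨j + 1, h⟩ \ I ⟨j, Nat.lt_of_succ_lt h⟩,
        e i = (((I ⟨j + 1, h⟩).card : ℚ) + ((I ⟨j, Nat.lt_of_succ_lt h⟩).card : ℚ) - 1) / 2) :
    ∀ J : Finset (Fin n), J.Nonempty →
      2 * (∑ i ∈ J, e i) ≥ (J.card : ℚ) * ((J.card : ℚ) - 1) ∧
      (2 * (∑ i ∈ J, e i) = (J.card : ℚ) * ((J.card : ℚ) - 1) ↔ ∃ j, J = I j) := by
  intro J hJne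
  obtain ⟨r', rfl⟩ : ∃ r'', r = r'' + 1 := ⟨r - 1, by omega⟩
  have htop' : I ⟨r', lt_add_one r'⟩ = Finset.univ := htop
  exact aux_main n r' I hmono hne e he0 heS J (htop' ▸ Finset.subset_univ J) hJne
end

section
/- Let x ∈ X and let u ∈ W₀ be the unique element of minimal length ℓ(x) = #{α ∈ R⁺ : (x,α∨) < 0} such that u(x) is dominant. Then ℓ(u e^x) = ℓ(e^x) − ℓ(x) in the extended affine Weyl group. -/
/-! A reduced based root datum.  Since `X` and `X∨` are free abelian groups of
finite rank in perfect duality, we may take `X = X∨ = ℤ^d` with the standard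
perfect pairing. -/

/-- The lattice `X ≅ X∨ ≅ ℤ^d`. -/
abbrev ZLat (d : ℕ) := Fin d → ℤ

/-- The perfect pairing `( , ) : X × X∨ → ℤ`. -/
def pairing {d : ℕ} (x y : ZLat d) : ℤ := ∑ i, x i * y i

/-- A reduced based root datum `(X, X∨, R, R∨, B)` with `X = X∨ = ℤ^d`:
a finite set `R` of roots, a coroot map `α ↦ α∨`, and a base `B ⊆ R`. -/
structure BasedRootDatum (d : ℕ) where
  /-- the (finite) set of roots -/
  R : Finset (ZLat d)
  /-- the coroot `α∨` associated to a root `α` -/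
  coroot : ZLat d → ZLat d
  /-- the base -/
  B : Finset (ZLat d)
  B_subset : B ⊆ R
  pair_self : ∀ α ∈ R, pairing α (coroot α) = 2
  reduced : ∀ α ∈ R, ∀ c : ℤ, c • α ∈ R → c = 1 ∨ c = -1
  refl_stable : ∀ α ∈ R, ∀ β ∈ R, β - pairing β (coroot α) • α ∈ R
  corefl_stable : ∀ α ∈ R, ∀ β ∈ R,
    coroot β - pairing α (coroot β) • coroot α ∈ R.image coroot
  base : ∀ α ∈ R,
    (∃ c : ZLat d → ℕ, α = ∑ b ∈ B, (c b : ℤ) • b) ∨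
    (∃ c : ZLat d → ℕ, α = -∑ b ∈ B, (c b : ℤ) • b)

namespace BasedRootDatum

variable {d : ℕ} (rd : BasedRootDatum d)

open Classical in
/-- The set `R⁺` of positive roots. -/
noncomputable def posRoots : Finset (ZLat d) :=
  rd.R.filter (fun α => ∃ c : ZLat d → ℕ, α = ∑ b ∈ rd.B, (c b : ℤ) • b)

open Classical in
/-- The set `R⁻` of negative roots. -/
noncomputable def negRoots : Finset (ZLat d) :=
  rd.R.filter (fun α => ∃ c : ZLat d → ℕ, α = -∑ b ∈ rd.B, (c b : ℤ) • b)

/-- The finite Weyl group `W₀`, generated by the reflections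
`s_α : x ↦ x − (x,α∨)α` for `α ∈ R`, realized as a subgroup of the
permutations of the lattice. -/
def weylGroup : Subgroup (Equiv.Perm (ZLat d)) :=
  Subgroup.closure {w | ∃ α ∈ rd.R, ∀ x, w x = x - pairing x (rd.coroot α) • α}

/-- The length `ℓ(w) = #{α ∈ R⁺ : w(α) ∈ R⁻}` on the finite Weyl group. -/
noncomputable def len0 (w : Equiv.Perm (ZLat d)) : ℕ :=
  (rd.posRoots.filter (fun α => w α ∈ rd.negRoots)).card

/-- The Iwahori–Matsumoto length of `w₀ e^x` in the extended affine Weyl group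
`W = W₀ · e^X`:
`ℓ(w₀e^x) = Σ_{α∈R⁺, w₀(α)∈R⁺} |(x,α∨)| + Σ_{α∈R⁺, w₀(α)∈R⁻} |1+(x,α∨)|`. -/
noncomputable def lenAff (w : Equiv.Perm (ZLat d)) (x : ZLat d) : ℕ :=
  ∑ α ∈ rd.posRoots.filter (fun α => w α ∈ rd.posRoots),
      (pairing x (rd.coroot α)).natAbs +
  ∑ α ∈ rd.posRoots.filter (fun α => w α ∈ rd.negRoots),
      (1 + pairing x (rd.coroot α)).natAbs

/-- `x ∈ X` is dominant if `(x,β∨) ≥ 0` for every simple root `β ∈ B`. -/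
def IsDominant (x : ZLat d) : Prop := ∀ β ∈ rd.B, 0 ≤ pairing x (rd.coroot β)

end BasedRootDatum

/-!
Elements `w ∈ W₀` permute `R`, commute with `-1` and satisfy `(w z, (w α)∨) = (z, α∨)`, and a
weight that is dominant pairs nonnegatively with every positive coroot. Hence for `α ∈ R⁺` with
`(x, α∨) < 0` the root `u α` is negative, so `{α ∈ R⁺ : (x, α∨) < 0}` lies in the inversion set
of `u`; both have `ℓ(x)` elements, so they coincide (which also forces `R⁺ ∩ R⁻ = ∅`). In
`ℓ(u e^x)` each of these roots then contributes `|1 + (x, α∨)| = |(x, α∨)| - 1` and every other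
positive root `|(x, α∨)|`, against `|(x, α∨)|` for all of `R⁺` in `ℓ(e^x)`.

Dominance on all of `R⁺` follows by induction on the height of `γ = Σ c_b b`: some simple `b`
with `c_b > 0` has `(b, γ∨) > 0`, and then `γ - b` is a root with coroot `p γ∨ - q b∨` for some
`p > 0` and `q ≥ 0`. This rests on `1 ≤ (α, β∨)(β, α∨) ≤ 3` for non-proportional roots with
`(α, β∨) ≠ 0`: otherwise `s_β s_α`, of trace `(α, β∨)(β, α∨) - 2` on `ℤα + ℤβ`, has an infinite
orbit in the finite set `R`.
-/

section Pairing

variable {d : ℕ}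

@[simp] lemma pairing_add_left (x y z : ZLat d) : pairing (x + y) z = pairing x z + pairing y z :=
  add_dotProduct x y z

@[simp] lemma pairing_sub_left (x y z : ZLat d) : pairing (x - y) z = pairing x z - pairing y z :=
  sub_dotProduct x y z

@[simp] lemma pairing_neg_left (x z : ZLat d) : pairing (-x) z = -pairing x z :=
  neg_dotProduct x z

@[simp] lemma pairing_smul_left (c : ℤ) (x z : ZLat d) : pairing (c • x) z = c * pairing x z :=
  smul_dotProduct c x z

@[simp] lemma pairing_sub_right (x y z : ZLat d) : pairing x (y - z) = pairing x y - pairing x z :=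
  dotProduct_sub x y z

@[simp] lemma pairing_smul_right (c : ℤ) (x z : ZLat d) : pairing x (c • z) = c * pairing x z :=
  dotProduct_smul c x z

lemma pairing_sum_left {ι : Type*} (s : Finset ι) (f : ι → ZLat d) (z : ZLat d) :
    pairing (∑ i ∈ s, f i) z = ∑ i ∈ s, pairing (f i) z :=
  sum_dotProduct s f z

end Pairing

lemma Set.Finite.not_injective {α : Type*} {s : Set α} (hs : s.Finite) {f : ℕ → α}
    (hf : ∀ n, f n ∈ s) : ¬ Function.Injective f := fun hinj =>
  Set.infinite_range_of_injective hinj (hs.subset (Set.range_subset_iff.2 hf))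

lemma Set.Finite.eq_zero_of_forall_add_smul_mem {M : Type*} [AddCommGroup M]
    [Module.IsTorsionFree ℤ M] {s : Set M} (hs : s.Finite) {a v : M}
    (h : ∀ n : ℕ, a + (n : ℤ) • v ∈ s) : v = 0 := by
  by_contra hv
  refine hs.not_injective h fun n p hnp => ?_
  exact_mod_cast smul_left_injective ℤ hv (add_left_cancel hnp :)

lemma Int.strictMono_abs_of_recurrence {τ : ℤ} (hτ : 2 ≤ |τ|) {b : ℕ → ℤ} (h₀ : b 0 = 0)
    (h₁ : b 1 ≠ 0) (hrec : ∀ n, b (n + 2) = τ * b (n + 1) - b n) :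
    StrictMono fun n => |b n| := by
  refine strictMono_nat_of_lt_succ fun n => ?_
  induction n with
  | zero => simpa [h₀] using h₁
  | succ n ih =>
    have : |τ * b (n + 1)| - |b n| ≤ |b (n + 2)| := by
      rw [hrec]
      exact abs_sub_abs_le_abs_sub _ _
    rw [abs_mul] at this
    nlinarith [abs_nonneg (b n)]

lemma exists_sum_smul_eq_sub_of_pos {M : Type*} [AddCommGroup M] [DecidableEq M] {B : Finset M}
    {c : M → ℕ} {b : M} (hb : b ∈ B) (hc : 0 < c b) :
    ∃ c' : M → ℕ, ∑ v ∈ B, (c' v : ℤ) • v = ∑ v ∈ B, (c v : ℤ) • v - b ∧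
      ∑ v ∈ B, c' v < ∑ v ∈ B, c v := by
  refine ⟨Function.update c b (c b - 1), ?_, ?_⟩
  · have key := Function.apply_update (fun v (n : ℕ) => (n : ℤ) • v) c b (c b - 1)
    rw [Finset.sum_congr rfl fun v _ => key v, Finset.sum_update_of_mem hb,
      Finset.sdiff_singleton_eq_erase, ← Finset.add_sum_erase B _ hb, Nat.cast_sub hc]
    module
  · rw [Finset.sum_update_of_mem hb, Finset.sdiff_singleton_eq_erase,
      ← Finset.add_sum_erase B _ hb]
    omega

/-- `(s_β s_α)ⁿ α = aₙ α + bₙ β` for `(aₙ, bₙ) = rankTwoCoeffs k m n`, where `k = (α, β∨)` and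
`m = (β, α∨)`. -/
def rankTwoCoeffs (k m : ℤ) : ℕ → ℤ × ℤ
  | 0 => (1, 0)
  | n + 1 => (-(rankTwoCoeffs k m n).1 - m * (rankTwoCoeffs k m n).2,
      k * (rankTwoCoeffs k m n).1 + (k * m - 1) * (rankTwoCoeffs k m n).2)

lemma rankTwoCoeffs_snd_add_two (k m : ℤ) (n : ℕ) :
    (rankTwoCoeffs k m (n + 2)).2 =
      (k * m - 2) * (rankTwoCoeffs k m (n + 1)).2 - (rankTwoCoeffs k m n).2 := by
  simp only [rankTwoCoeffs]
  ring

namespace BasedRootDatum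

variable {d : ℕ}

def reflect (rd : BasedRootDatum d) (α z : ZLat d) : ZLat d := z - pairing z (rd.coroot α) • α

section Reflections

variable {rd : BasedRootDatum d}

lemma reflect_mem {α β : ZLat d} (hα : α ∈ rd.R) (hβ : β ∈ rd.R) : rd.reflect α β ∈ rd.R :=
  rd.refl_stable α hα β hβ

lemma reflect_reflect {α : ZLat d} (hα : α ∈ rd.R) (z : ZLat d) :
    rd.reflect α (rd.reflect α z) = z := by
  simp only [reflect, pairing_sub_left, pairing_smul_left, rd.pair_self α hα]
  module

lemma neg_mem {α : ZLat d} (hα : α ∈ rd.R) : -α ∈ rd.R := by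
  have h := reflect_mem hα hα
  rwa [reflect, rd.pair_self α hα, two_smul, sub_add_cancel_left] at h

/-- The composite of the two reflections translates `δ₁` by `2 (δ₁ - δ₂)`, and `R` is finite. -/
lemma eq_of_pairing_eq_two {δ₁ δ₂ q : ZLat d} (h₁ : δ₁ ∈ rd.R)
    (hq₁ : pairing δ₁ q = 2) (hq₂ : pairing δ₂ q = 2)
    (st₁ : ∀ β ∈ rd.R, β - pairing β q • δ₁ ∈ rd.R)
    (st₂ : ∀ β ∈ rd.R, β - pairing β q • δ₂ ∈ rd.R) : δ₁ = δ₂ := by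
  have orbit : ∀ n : ℕ, δ₁ + (n : ℤ) • ((2 : ℤ) • (δ₁ - δ₂)) ∈ rd.R := by
    intro n
    induction n with
    | zero => simpa using h₁
    | succ n ih =>
      have := st₁ _ (st₂ _ ih)
      simp only [pairing_add_left, pairing_sub_left, pairing_smul_left, hq₁, hq₂] at this
      convert this using 1
      push_cast
      module
  have := rd.R.finite_toSet.eq_zero_of_forall_add_smul_mem orbit
  rw [smul_eq_zero, sub_eq_zero] at this
  exact this.resolve_left two_ne_zero

lemma reflect_reflect_reflect {α : ZLat d} (hα : α ∈ rd.R) (β z : ZLat d) :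
    rd.reflect α (rd.reflect β (rd.reflect α z)) =
      z - pairing z (rd.coroot β - pairing α (rd.coroot β) • rd.coroot α) • rd.reflect α β := by
  simp only [reflect, pairing_sub_left, pairing_smul_left, pairing_sub_right,
    pairing_smul_right, rd.pair_self α hα]
  module

lemma coroot_reflect {α β : ZLat d} (hα : α ∈ rd.R) (hβ : β ∈ rd.R) :
    rd.coroot (rd.reflect α β) = rd.coroot β - pairing α (rd.coroot β) • rd.coroot α := by
  obtain ⟨γ, hγ, hγq⟩ := Finset.mem_image.1 (rd.corefl_stable α hα β hβ)
  rw [← hγq]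
  congr 1
  refine eq_of_pairing_eq_two (reflect_mem hα hβ) ?_ (rd.pair_self γ hγ) (fun z hz => ?_)
    (rd.refl_stable γ hγ)
  · simp only [hγq, reflect, pairing_sub_left, pairing_smul_left, pairing_sub_right,
      pairing_smul_right, rd.pair_self α hα, rd.pair_self β hβ]
    ring
  · rw [hγq, ← reflect_reflect_reflect hα]
    exact reflect_mem hα (reflect_mem hβ (reflect_mem hα hz))

lemma coroot_neg {α : ZLat d} (hα : α ∈ rd.R) : rd.coroot (-α) = -rd.coroot α := by
  have h := coroot_reflect hα hα
  rwa [reflect, rd.pair_self α hα, two_smul, sub_add_cancel_left, two_smul,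
    sub_add_cancel_left] at h

lemma pairing_reflect_coroot_reflect {α β : ZLat d} (hα : α ∈ rd.R) (hβ : β ∈ rd.R)
    (z : ZLat d) : pairing (rd.reflect α z) (rd.coroot (rd.reflect α β)) =
      pairing z (rd.coroot β) := by
  rw [coroot_reflect hα hβ]
  simp only [reflect, pairing_sub_left, pairing_smul_left, pairing_sub_right,
    pairing_smul_right, rd.pair_self α hα]
  ring

end Reflections

def autGroup (rd : BasedRootDatum d) : Subgroup (Equiv.Perm (ZLat d)) where
  carrier := {w | (∀ z, w (-z) = -w z) ∧ (∀ α, w α ∈ rd.R ↔ α ∈ rd.R) ∧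
    ∀ α ∈ rd.R, ∀ z, pairing (w z) (rd.coroot (w α)) = pairing z (rd.coroot α)}
  one_mem' := ⟨fun _ => rfl, fun _ => Iff.rfl, fun _ _ _ => rfl⟩
  mul_mem' := by
    rintro w v ⟨hw_neg, hw_R, hw_pair⟩ ⟨hv_neg, hv_R, hv_pair⟩
    refine ⟨fun z => ?_, fun α => ?_, fun α hα z => ?_⟩
    · simp only [Equiv.Perm.mul_apply, hv_neg, hw_neg]
    · simp only [Equiv.Perm.mul_apply, hw_R, hv_R]
    · simp only [Equiv.Perm.mul_apply, hw_pair _ ((hv_R α).2 hα), hv_pair α hα]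
  inv_mem' := by
    rintro w ⟨hw_neg, hw_R, hw_pair⟩
    have hw_inv : ∀ z, w (w⁻¹ z) = z := w.apply_symm_apply
    refine ⟨fun z => ?_, fun α => ?_, fun α hα z => ?_⟩
    · rw [Equiv.Perm.inv_eq_iff_eq, hw_neg, hw_inv]
    · rw [← hw_R, hw_inv]
    · rw [← hw_pair _ ((hw_R _).1 (by rwa [hw_inv])), hw_inv, hw_inv]

variable {rd : BasedRootDatum d}

lemma weylGroup_le_autGroup : rd.weylGroup ≤ rd.autGroup := by
  refine Subgroup.closure_le _ |>.2 ?_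
  rintro w ⟨α, hα, hw : ∀ z, w z = rd.reflect α z⟩
  refine ⟨fun z => ?_, fun β => ⟨fun h => ?_, fun h => ?_⟩, fun β hβ z => ?_⟩
  · simp only [hw, reflect, pairing_neg_left, neg_smul, sub_neg_eq_add, neg_sub]
    abel
  · rw [← reflect_reflect hα β, ← hw β]
    exact reflect_mem hα h
  · rw [hw]
    exact reflect_mem hα h
  · rw [hw, hw]
    exact pairing_reflect_coroot_reflect hα hβ z

section RankTwo

lemma reflect_reflect_smul_add_smul {α β : ZLat d} (hα : α ∈ rd.R) (hβ : β ∈ rd.R) (a b : ℤ) :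
    rd.reflect β (rd.reflect α (a • α + b • β)) =
      (-a - pairing β (rd.coroot α) * b) • α +
        (pairing α (rd.coroot β) * a +
          (pairing α (rd.coroot β) * pairing β (rd.coroot α) - 1) * b) • β := by
  simp only [reflect, pairing_add_left, pairing_sub_left, pairing_smul_left,
    rd.pair_self α hα, rd.pair_self β hβ]
  module

lemma rankTwoCoeffs_smul_add_smul_mem {α β : ZLat d} (hα : α ∈ rd.R) (hβ : β ∈ rd.R) (n : ℕ) :
    let p := rankTwoCoeffs (pairing α (rd.coroot β)) (pairing β (rd.coroot α)) n
    p.1 • α + p.2 • β ∈ rd.R := by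
  induction n with
  | zero => simpa [rankTwoCoeffs] using hα
  | succ n ih =>
    simp only [rankTwoCoeffs, ← reflect_reflect_smul_add_smul hα hβ]
    exact reflect_mem hβ (reflect_mem hα ih)

/-- The β-coefficients of the roots `(s_β s_α)ⁿ α` grow strictly in absolute value, so two of
these roots coincide only if `α` and `β` are proportional. -/
lemma exists_smul_eq_smul_of_two_le_abs {α β : ZLat d} (hα : α ∈ rd.R) (hβ : β ∈ rd.R)
    (hk : pairing α (rd.coroot β) ≠ 0)
    (hτ : 2 ≤ |pairing α (rd.coroot β) * pairing β (rd.coroot α) - 2|) :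
    ∃ r s : ℤ, r ≠ 0 ∧ r • β = s • α := by
  set p := rankTwoCoeffs (pairing α (rd.coroot β)) (pairing β (rd.coroot α))
  have hb_inj : Function.Injective fun n => (p n).2 := by
    refine fun n n' h => (Int.strictMono_abs_of_recurrence (b := fun n => (p n).2) hτ rfl ?_
      (rankTwoCoeffs_snd_add_two _ _)).injective (congrArg abs h)
    simpa [p, rankTwoCoeffs] using hk
  by_contra! hindep
  refine rd.R.finite_toSet.not_injective (rankTwoCoeffs_smul_add_smul_mem hα hβ) fun n n' h => ?_
  refine hb_inj (sub_eq_zero.1 (by_contra fun hne => hindep _ ((p n').1 - (p n).1) hne ?_))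
  rw [sub_smul, sub_smul, sub_eq_sub_iff_add_eq_add, add_comm, h, add_comm]

lemma eq_or_eq_neg_of_two_smul_eq {α β : ZLat d} (hα : α ∈ rd.R) (hβ : β ∈ rd.R) {k : ℤ}
    (hk : Even k) (h : (2 : ℤ) • α = k • β) : α = β ∨ α = -β := by
  obtain ⟨j, rfl⟩ := hk
  have hj : α = j • β :=
    smul_right_injective (ZLat d) two_ne_zero (show (2 : ℤ) • α = (2 : ℤ) • (j • β) by
      rw [h]; module)
  rw [hj] at hα ⊢
  rcases rd.reduced β hβ j hα with rfl | rfl <;> simp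

lemma eq_or_eq_neg_of_smul_eq {α β : ZLat d} (hα : α ∈ rd.R) (hβ : β ∈ rd.R) {r s : ℤ}
    (hr : r ≠ 0) (h : r • β = s • α) : α = β ∨ α = -β := by
  set k := pairing α (rd.coroot β)
  set m := pairing β (rd.coroot α)
  have hk : r * 2 = s * k := by
    have := congrArg (pairing · (rd.coroot β)) h
    simpa only [pairing_smul_left, rd.pair_self β hβ] using this
  have hm : r * m = s * 2 := by
    have := congrArg (pairing · (rd.coroot α)) h
    simpa only [pairing_smul_left, rd.pair_self α hα] using this
  have hs : s ≠ 0 := by rintro rfl; simp [hr] at hk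
  have hαβ : (2 : ℤ) • α = k • β := smul_right_injective (ZLat d) hs <|
    show s • (2 : ℤ) • α = s • k • β by rw [smul_comm, ← h, smul_smul, smul_smul, mul_comm, hk]
  have hβα : (2 : ℤ) • β = m • α := smul_right_injective (ZLat d) hr <|
    show r • (2 : ℤ) • β = r • m • α by rw [smul_comm, h, smul_smul, smul_smul, mul_comm 2, ← hm]
  have hkm : k * m = 4 := mul_left_cancel₀ hr (by linear_combination k * hm - 2 * hk)
  rcases Int.even_mul.1 (by rw [hkm]; decide) with hk_even | hm_even
  · exact eq_or_eq_neg_of_two_smul_eq hα hβ hk_even hαβ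
  · rcases eq_or_eq_neg_of_two_smul_eq hβ hα hm_even hβα with rfl | rfl
    · exact Or.inl rfl
    · exact Or.inr (neg_neg α).symm

lemma one_le_mul_pairing_le_three {α β : ZLat d} (hα : α ∈ rd.R) (hβ : β ∈ rd.R)
    (hne : α ≠ β) (hne' : α ≠ -β) (hk : pairing α (rd.coroot β) ≠ 0) :
    1 ≤ pairing α (rd.coroot β) * pairing β (rd.coroot α) ∧
      pairing α (rd.coroot β) * pairing β (rd.coroot α) ≤ 3 := by
  by_contra! hout
  obtain ⟨r, s, hr, h⟩ := exists_smul_eq_smul_of_two_le_abs hα hβ hk (by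
    rcases le_or_gt 1 (pairing α (rd.coroot β) * pairing β (rd.coroot α)) with h | h
    · rw [abs_of_nonneg] <;> linarith [hout h]
    · rw [abs_of_neg] <;> linarith)
  rcases eq_or_eq_neg_of_smul_eq hα hβ hr h with h | h
  exacts [hne h, hne' h]

end RankTwo

section Dominance

lemma exists_mem_base_pairing_pos {γ : ZLat d} (hγ : γ ∈ rd.R) {c : ZLat d → ℕ}
    (hc : γ = ∑ b ∈ rd.B, (c b : ℤ) • b) :
    ∃ b ∈ rd.B, 0 < c b ∧ 0 < pairing b (rd.coroot γ) := by
  have hsum : ∑ b ∈ rd.B, (0 : ℤ) < ∑ b ∈ rd.B, (c b : ℤ) * pairing b (rd.coroot γ) := by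
    have h := rd.pair_self γ hγ
    nth_rewrite 1 [hc] at h
    simp only [pairing_sum_left, pairing_smul_left] at h
    simp [h]
  obtain ⟨b, hb, hpos⟩ := Finset.exists_lt_of_sum_lt hsum
  rcases pos_and_pos_or_neg_and_neg_of_mul_pos hpos with ⟨hcb, hkb⟩ | ⟨hcb, -⟩
  · exact ⟨b, hb, by exact_mod_cast hcb, hkb⟩
  · exact ((Int.natCast_nonneg _).not_gt hcb).elim

lemma sub_mem_of_pairing_pos {b γ : ZLat d} (hb : b ∈ rd.R) (hγ : γ ∈ rd.R) (hne : b ≠ γ)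
    (hk : 0 < pairing b (rd.coroot γ)) :
    γ - b ∈ rd.R ∧ ∃ p q : ℤ, 0 < p ∧ 0 ≤ q ∧
      rd.coroot (γ - b) = p • rd.coroot γ - q • rd.coroot b := by
  have hne' : b ≠ -γ := by
    rintro rfl
    simp [rd.pair_self γ hγ] at hk
  obtain ⟨hlow, hhigh⟩ := one_le_mul_pairing_le_three hb hγ hne hne' hk.ne'
  have hm : 0 < pairing γ (rd.coroot b) := pos_of_mul_pos_right (by omega) hk.le
  have hk1_or_hm1 : pairing b (rd.coroot γ) = 1 ∨ pairing γ (rd.coroot b) = 1 := by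
    by_contra! h
    have : 2 ≤ pairing b (rd.coroot γ) := by omega
    have : 2 ≤ pairing γ (rd.coroot b) := by omega
    nlinarith
  rcases hk1_or_hm1 with hk1 | hm1
  · have hsub : rd.reflect γ b = -(γ - b) := by rw [reflect, hk1, one_smul, neg_sub]
    have hmem := reflect_mem hγ hb
    have hco := coroot_reflect hγ hb
    rw [hsub] at hmem hco
    refine ⟨by simpa using neg_mem hmem, _, 1, hm, zero_le_one, ?_⟩
    rw [← neg_neg (γ - b), coroot_neg hmem, hco]
    module
  · have hsub : rd.reflect b γ = γ - b := by rw [reflect, hm1, one_smul]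
    have hco := coroot_reflect hb hγ
    rw [hsub] at hco
    exact ⟨hsub ▸ reflect_mem hb hγ, 1, _, one_pos, hk.le, by rw [hco, one_smul]⟩

lemma IsDominant.pairing_coroot_nonneg {y : ZLat d} (hy : rd.IsDominant y) {γ : ZLat d}
    (hγ : γ ∈ rd.posRoots) : 0 ≤ pairing y (rd.coroot γ) := by
  classical
  obtain ⟨hγR, c, hc⟩ := Finset.mem_filter.1 hγ
  clear hγ
  induction hn : ∑ b ∈ rd.B, c b using Nat.strong_induction_on generalizing γ c with
  | _ n ih =>
  obtain ⟨b, hbB, hcb, hkb⟩ := exists_mem_base_pairing_pos hγR hc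
  by_cases hbγ : b = γ
  · exact hbγ ▸ hy b hbB
  obtain ⟨hsubR, p, q, hp, hq, hco⟩ := sub_mem_of_pairing_pos (rd.B_subset hbB) hγR hbγ hkb
  obtain ⟨c', hc', hlt⟩ := exists_sum_smul_eq_sub_of_pos hbB hcb
  have := ih _ (hn ▸ hlt) hsubR c' (by rw [hc', hc]) rfl
  rw [hco, pairing_sub_right, pairing_smul_right, pairing_smul_right] at this
  nlinarith [hy b hbB]

end Dominance

section Length

open Classical

lemma mem_R_of_mem_posRoots {α : ZLat d} (h : α ∈ rd.posRoots) : α ∈ rd.R :=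
  (Finset.mem_filter.1 h).1

lemma mem_posRoots_or_mem_negRoots {α : ZLat d} (hα : α ∈ rd.R) :
    α ∈ rd.posRoots ∨ α ∈ rd.negRoots :=
  (rd.base α hα).imp (fun h => Finset.mem_filter.2 ⟨hα, h⟩) (fun h => Finset.mem_filter.2 ⟨hα, h⟩)

lemma neg_mem_negRoots {α : ZLat d} (h : α ∈ rd.posRoots) : -α ∈ rd.negRoots := by
  obtain ⟨hR, c, rfl⟩ := Finset.mem_filter.1 h
  exact Finset.mem_filter.2 ⟨neg_mem hR, c, rfl⟩

lemma neg_mem_posRoots {α : ZLat d} (h : α ∈ rd.negRoots) : -α ∈ rd.posRoots := by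
  obtain ⟨hR, c, rfl⟩ := Finset.mem_filter.1 h
  exact Finset.mem_filter.2 ⟨neg_mem hR, c, neg_neg _⟩

lemma exists_apply_mem_posRoots_inter_negRoots {u : Equiv.Perm (ZLat d)} (hu : u ∈ rd.autGroup)
    {γ : ZLat d} (hγp : γ ∈ rd.posRoots) (hγn : γ ∈ rd.negRoots) :
    ∃ α ∈ rd.posRoots, u α ∈ rd.posRoots ∧ u α ∈ rd.negRoots := by
  obtain ⟨hu_neg, hu_R, -⟩ := hu
  have huγ : u (u⁻¹ γ) = γ := u.apply_symm_apply γ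
  rcases mem_posRoots_or_mem_negRoots ((hu_R _).1 (huγ ▸ mem_R_of_mem_posRoots hγp)) with h | h
  · exact ⟨_, h, by rwa [huγ], by rwa [huγ]⟩
  · refine ⟨_, neg_mem_posRoots h, ?_⟩
    rw [hu_neg, huγ]
    exact ⟨neg_mem_posRoots hγn, neg_mem_negRoots hγp⟩

lemma apply_mem_posRoots_or_mem_negRoots {u : Equiv.Perm (ZLat d)} (hu : u ∈ rd.autGroup)
    {α : ZLat d} (hα : α ∈ rd.posRoots) : u α ∈ rd.posRoots ∨ u α ∈ rd.negRoots :=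
  mem_posRoots_or_mem_negRoots ((hu.2.1 α).2 (mem_R_of_mem_posRoots hα))

lemma pairing_coroot_nonneg_of_apply_mem_posRoots {u : Equiv.Perm (ZLat d)} (hu : u ∈ rd.autGroup)
    {x : ZLat d} (hdom : rd.IsDominant (u x)) {α : ZLat d} (hα : α ∈ rd.posRoots)
    (huα : u α ∈ rd.posRoots) : 0 ≤ pairing x (rd.coroot α) :=
  hu.2.2 α (mem_R_of_mem_posRoots hα) x ▸ hdom.pairing_coroot_nonneg huα

lemma lenAff_one (hdisj : Disjoint rd.posRoots rd.negRoots) (x : ZLat d) :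
    rd.lenAff 1 x = ∑ α ∈ rd.posRoots, (pairing x (rd.coroot α)).natAbs := by
  have hpos : ∀ α ∈ rd.posRoots, (1 : Equiv.Perm (ZLat d)) α ∈ rd.posRoots := fun _ h => h
  have hneg : ∀ α ∈ rd.posRoots, (1 : Equiv.Perm (ZLat d)) α ∉ rd.negRoots :=
    fun _ h => Finset.disjoint_left.1 hdisj h
  rw [lenAff, Finset.filter_true_of_mem hpos, Finset.filter_false_of_mem hneg, Finset.sum_empty,
    add_zero]

lemma lenAff_add_card_eq_sum {u : Equiv.Perm (ZLat d)} {x : ZLat d}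
    (hpos : ∀ α ∈ rd.posRoots, u α ∈ rd.posRoots ↔ ¬ pairing x (rd.coroot α) < 0)
    (hneg : ∀ α ∈ rd.posRoots, u α ∈ rd.negRoots ↔ pairing x (rd.coroot α) < 0) :
    rd.lenAff u x + (rd.posRoots.filter fun α => pairing x (rd.coroot α) < 0).card =
      ∑ α ∈ rd.posRoots, (pairing x (rd.coroot α)).natAbs := by
  rw [lenAff, Finset.filter_congr hpos, Finset.filter_congr hneg, add_assoc,
    Finset.card_eq_sum_ones, ← Finset.sum_add_distrib,
    Finset.sum_congr rfl fun α hα => (by have := (Finset.mem_filter.1 hα).2; omega :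
      (1 + pairing x (rd.coroot α)).natAbs + 1 = (pairing x (rd.coroot α)).natAbs)]
  exact Finset.sum_filter_not_add_sum_filter _ _ _

end Length

end BasedRootDatum

open Classical BasedRootDatum in
/-- Let `x ∈ X` and let `u ∈ W₀` be the (unique) element of minimal length
`ℓ(x) = #{α ∈ R⁺ : (x,α∨) < 0}` such that `u(x)` is dominant.  Then
`ℓ(u e^x) = ℓ(e^x) − ℓ(x)` in the extended affine Weyl group. -/
theorem stmt_14 {d : ℕ} (rd : BasedRootDatum d) (x : ZLat d)
    (u : Equiv.Perm (ZLat d)) (hu : u ∈ rd.weylGroup)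
    (hlen : rd.len0 u = (rd.posRoots.filter (fun α => pairing x (rd.coroot α) < 0)).card)
    (hdom : rd.IsDominant (u x)) :
    rd.lenAff u x +
        (rd.posRoots.filter (fun α => pairing x (rd.coroot α) < 0)).card =
      rd.lenAff 1 x := by
  have hu' := weylGroup_le_autGroup hu
  have hnonneg := fun α => pairing_coroot_nonneg_of_apply_mem_posRoots (α := α) hu' hdom
  have hinv : (rd.posRoots.filter fun α => u α ∈ rd.negRoots) =
      rd.posRoots.filter fun α => pairing x (rd.coroot α) < 0 := by
    refine (Finset.eq_of_subset_of_card_le (fun α hα => ?_) hlen.le).symm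
    obtain ⟨hα, hneg⟩ := Finset.mem_filter.1 hα
    refine Finset.mem_filter.2 ⟨hα, ?_⟩
    exact (apply_mem_posRoots_or_mem_negRoots hu' hα).resolve_left fun h =>
      (hnonneg α hα h).not_gt hneg
  have hneg : ∀ α ∈ rd.posRoots, u α ∈ rd.negRoots ↔ pairing x (rd.coroot α) < 0 :=
    fun α hα => by simpa [hα] using Finset.ext_iff.1 hinv α
  have hdisj : Disjoint rd.posRoots rd.negRoots := Finset.disjoint_left.2 fun γ hγp hγn => by
    obtain ⟨α, hα, hpos, hneg'⟩ := exists_apply_mem_posRoots_inter_negRoots hu' hγp hγn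
    exact (hnonneg α hα hpos).not_gt ((hneg α hα).1 hneg')
  rw [lenAff_one hdisj]
  exact lenAff_add_card_eq_sum (fun α hα => ⟨fun h => (hnonneg α hα h).not_gt,
    fun h => (apply_mem_posRoots_or_mem_negRoots hu' hα).resolve_right (h ∘ (hneg α hα).1)⟩) hneg
end

section
/- For GL(n): let 0 < u < 1/n be rational, a, b units in the ring of integers of Q̄_p, and define a character χ of X = ℤⁿ (extended to A ∩ H over Q̄_p with χ(q) = q, 0 < v_p(q)) by χ(E_i) = a q^{u+i-1} for 1 ≤ i ≤ n−1 and χ(E_n) = b q^{(n-1)(1-u)}. Then χ is integral, i.e. χ(E_I) ∈ Z̄_p for every subset I ⊆ {1,…,n} and χ(E_{{1,…,n}}) = a^{n-1} b ∈ Z̄_p^×; moreover the reduction mod p of χ is the supersingular character killing E_I for all proper nonempty I and taking value r_p(a^{n-1}b) on E_{{1,…,n}}. -/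
/-!
Each `χ(E_I)` is a unit of `Z̄_p` times `q ^ e(I)` with `e(I) = t(1-t)/2 + Σ_{i∈I} e_i`, so
everything is a statement about `e(I)`. Since `t` distinct indices `i ∈ {0, …, n-1}` sum to at
least `t(t-1)/2`, one gets `e(I) ≥ t u` when `n ∉ I` and `e(I) ≥ (n - t)(1 - u)` when `n ∈ I`;
both bounds are positive for proper nonempty `I` because `0 < u < 1`, and for `I = {1, …, n}`
Gauss' formula makes `e(I)` exactly `0`.
-/

open Finset

section HomLemmas

variable {ι M A G : Type*}

lemma map_prod_eq_sum_of_map_mul [CommMonoid M] [AddCommGroup A] {v : M → A}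
    (hv : ∀ x y, v (x * y) = v x + v y) (s : Finset ι) (f : ι → M) :
    v (∏ i ∈ s, f i) = ∑ i ∈ s, v (f i) :=
  map_prod (MonoidHom.mk' (fun x => Multiplicative.ofAdd (v x)) hv) f s

lemma map_sum_eq_prod_of_map_add [AddCommMonoid A] [CommGroup G] {φ : A → G}
    (hφ : ∀ x y, φ (x + y) = φ x * φ y) (s : Finset ι) (f : ι → A) :
    φ (∑ i ∈ s, f i) = ∏ i ∈ s, φ (f i) :=
  map_prod (MonoidHom.mk' (fun x : Multiplicative A => φ x.toAdd) hφ) (Multiplicative.ofAdd ∘ f) s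

lemma map_zero_eq_one_of_map_add [AddCommMonoid A] [Group G] {φ : A → G}
    (hφ : ∀ x y, φ (x + y) = φ x * φ y) : φ 0 = 1 :=
  map_one (MonoidHom.mk' (fun x : Multiplicative A => φ x.toAdd) hφ)

end HomLemmas

lemma Fin.prod_ite_val_eq_sub_one {M : Type*} [CommMonoid M] {n : ℕ} (hn : 0 < n) (a b : M) :
    ∏ i : Fin n, (if (i : ℕ) = n - 1 then b else a) = a ^ (n - 1) * b := by
  obtain ⟨m, rfl⟩ := Nat.exists_eq_add_one_of_ne_zero hn.ne'
  simp [Fin.prod_univ_castSucc, (Fin.is_lt _).ne]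

lemma Fin.card_mul_card_sub_one_le_two_mul_sum {n : ℕ} (s : Finset (Fin n)) :
    (#s : ℚ) * (#s - 1) ≤ 2 * ∑ i ∈ s, ((i : ℕ) : ℚ) := by
  induction s using Finset.induction_on_max with
  | empty => simp
  | insert a s ha ih =>
    have hcard : (#s : ℚ) ≤ (a : ℕ) := by
      have := card_le_card (fun x hx => mem_Iio.2 (ha x hx) : s ⊆ Iio a)
      exact_mod_cast (Fin.card_Iio a) ▸ this
    rw [card_insert_of_notMem fun h => lt_irrefl a (ha a h),
      sum_insert fun h => lt_irrefl a (ha a h)]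
    push_cast
    nlinarith

namespace GLSupersingular

/-- The exponent of `q` in `χ(E_i)`, for `i : Fin n` standing for the index `i + 1`. -/
def qExp (n : ℕ) (u : ℚ) (i : Fin n) : ℚ :=
  if (i : ℕ) = n - 1 then (n - 1 : ℚ) * (1 - u) else u + (i : ℕ)

def qExpSubset (n : ℕ) (u : ℚ) (I : Finset (Fin n)) : ℚ :=
  (#I : ℚ) * (1 - #I) / 2 + ∑ i ∈ I, qExp n u i

variable {n : ℕ} {u : ℚ}

lemma qExp_of_ne {i : Fin n} (hi : (i : ℕ) ≠ n - 1) : qExp n u i = u + (i : ℕ) := if_neg hi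

lemma card_mul_le_qExpSubset {I : Finset (Fin n)} (hI : ∀ i ∈ I, (i : ℕ) ≠ n - 1) :
    #I * u ≤ qExpSubset n u I := by
  have hsum : ∑ i ∈ I, qExp n u i = #I * u + ∑ i ∈ I, ((i : ℕ) : ℚ) := by
    rw [sum_congr rfl fun i hi => qExp_of_ne (hI i hi), sum_add_distrib, sum_const, nsmul_eq_mul]
  have hdistinct := Fin.card_mul_card_sub_one_le_two_mul_sum I
  rw [qExpSubset, hsum]
  linarith

lemma sub_card_mul_le_qExpSubset {I : Finset (Fin n)} {i₀ : Fin n} (hi₀ : i₀ ∈ I)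
    (hi₀n : (i₀ : ℕ) = n - 1) : (n - #I) * (1 - u) ≤ qExpSubset n u I := by
  have hrest := card_mul_le_qExpSubset (u := u) (I := I.erase i₀) fun i hi hin =>
    ne_of_mem_erase hi (Fin.ext (hin.trans hi₀n.symm))
  have hcard : (#(I.erase i₀) : ℚ) = #I - 1 := by
    rw [card_erase_of_mem hi₀, Nat.cast_pred (card_pos.2 ⟨i₀, hi₀⟩)]
  have hqExp : qExp n u i₀ = (n - 1) * (1 - u) := if_pos hi₀n
  rw [qExpSubset, hcard] at hrest
  rw [qExpSubset, ← add_sum_erase _ _ hi₀, hqExp]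
  linarith

lemma qExpSubset_univ : qExpSubset n u univ = 0 := by
  cases n with
  | zero => simp [qExpSubset]
  | succ m =>
    have hlast : qExp (m + 1) u (Fin.last m) = m * (1 - u) := by simp [qExp]
    have hcast : ∀ i : Fin m, qExp (m + 1) u i.castSucc = u + (i : ℕ) := fun i =>
      qExp_of_ne (by simpa using i.is_lt.ne)
    have hgauss : (∑ i : Fin m, ((i : ℕ) : ℚ)) * 2 = m * (m - 1) := by
      rw [Fin.sum_univ_eq_sum_range (fun i => (i : ℚ)), ← Nat.cast_sum, ← Nat.cast_two,
        ← Nat.cast_mul, sum_range_id_mul_two]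
      rcases m.eq_zero_or_pos with rfl | hm
      · simp
      · push_cast [Nat.cast_pred hm]
        ring
    rw [qExpSubset, Fin.sum_univ_castSucc, hlast, sum_congr rfl fun i _ => hcast i,
      sum_add_distrib, sum_const, card_fin, card_fin, nsmul_eq_mul]
    push_cast
    linarith

lemma qExpSubset_nonneg (hu0 : 0 ≤ u) (hu1 : u ≤ 1) (I : Finset (Fin n)) :
    0 ≤ qExpSubset n u I := by
  by_cases h : ∃ i ∈ I, (i : ℕ) = n - 1
  · obtain ⟨i₀, hi₀, hi₀n⟩ := h
    have hcard : (#I : ℚ) ≤ n := by exact_mod_cast card_le_univ I |>.trans_eq (Fintype.card_fin n)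
    exact (mul_nonneg (sub_nonneg.2 hcard) (sub_nonneg.2 hu1)).trans
      (sub_card_mul_le_qExpSubset hi₀ hi₀n)
  · push Not at h
    exact (mul_nonneg (Nat.cast_nonneg _) hu0).trans (card_mul_le_qExpSubset h)

lemma qExpSubset_pos (hu0 : 0 < u) (hu1 : u < 1) {I : Finset (Fin n)} (hne : I.Nonempty)
    (hI : I ≠ univ) : 0 < qExpSubset n u I := by
  by_cases h : ∃ i ∈ I, (i : ℕ) = n - 1
  · obtain ⟨i₀, hi₀, hi₀n⟩ := h
    have hcard : (#I : ℚ) < n := by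
      exact_mod_cast card_fin n ▸ card_lt_card (ssubset_univ_iff.2 hI)
    exact (mul_pos (sub_pos.2 hcard) (sub_pos.2 hu1)).trans_le
      (sub_card_mul_le_qExpSubset hi₀ hi₀n)
  · push Not at h
    exact (mul_pos (Nat.cast_pos.2 hne.card_pos) hu0).trans_le (card_mul_le_qExpSubset h)

end GLSupersingular

open GLSupersingular in
/-- For `GL(n)`: let `0 < u < 1/n` be rational, `a, b` units of `Z̄_p`, and define
a character `χ` of `X = ℤⁿ` (extended to `A ∩ H` over `Q̄_p`, with `χ(q) = q` of
positive valuation) by `χ(E_i) = a q^{u+i-1}` for `1 ≤ i ≤ n−1` and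
`χ(E_n) = b q^{(n-1)(1-u)}`, so that `χ(E_I) = q^{t(1-t)/2} Π_{i∈I} χ(E_i)` for
`|I| = t`.  Then `χ` is integral: `χ(E_I) ∈ Z̄_p` (valuation `≥ 0`) for every
`I ⊆ {1,…,n}`, and `χ(E_{{1,…,n}}) = a^{n-1} b` is a unit of `Z̄_p`
(valuation `0`); moreover the reduction mod `p` of `χ` is the supersingular
character: `χ(E_I)` has valuation `> 0` (reduction `0`) for every proper
nonempty `I`, while `χ(E_{{1,…,n}})` reduces to `r_p(a^{n-1}b)`.

The `p`-adic field `Q̄_p` is modelled by a field `K` equipped with a (rank one,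
`ℚ`-valued) valuation `v` on `Kˣ`, and the fixed compatible system of rational
powers of `q` by a homomorphism `qp : ℚ → Kˣ` with `q = qp 1`. -/
theorem stmt_19 (n : ℕ) (hn : 0 < n) (K : Type*) [Field K]
    (v : Kˣ → ℚ) (hv : ∀ x y : Kˣ, v (x * y) = v x + v y)
    (qp : ℚ → Kˣ) (hqp : ∀ e e' : ℚ, qp (e + e') = qp e * qp e')
    (hqval : ∀ e : ℚ, v (qp e) = e * v (qp 1)) (hqpos : 0 < v (qp 1))
    (a b : Kˣ) (hva : v a = 0) (hvb : v b = 0)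
    (u : ℚ) (hu0 : 0 < u) (hu1 : u < 1 / n)
    (χE : Finset (Fin n) → Kˣ)
    (hχE : ∀ I : Finset (Fin n),
      χE I = qp ((I.card : ℚ) * (1 - (I.card : ℚ)) / 2) *
        ∏ i ∈ I, (if (i : ℕ) = n - 1 then b * qp ((n - 1 : ℚ) * (1 - u))
                  else a * qp (u + (i : ℕ))) ) :
    (∀ I : Finset (Fin n), 0 ≤ v (χE I)) ∧
    (χE Finset.univ = a ^ (n - 1) * b ∧ v (a ^ (n - 1) * b) = 0) ∧
    (∀ I : Finset (Fin n), I.Nonempty → I ≠ Finset.univ → 0 < v (χE I)) := by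
  set c : Fin n → Kˣ := fun i => if (i : ℕ) = n - 1 then b else a
  have hχ : ∀ I, χE I = (∏ i ∈ I, c i) * qp (qExpSubset n u I) := fun I => by
    have hfactor : ∀ i : Fin n, (if (i : ℕ) = n - 1 then b * qp ((n - 1 : ℚ) * (1 - u))
        else a * qp (u + (i : ℕ))) = c i * qp (qExp n u i) := fun i => by
      simp only [c, qExp]; split_ifs <;> rfl
    rw [hχE, prod_congr rfl fun i _ => hfactor i, prod_mul_distrib,
      ← map_sum_eq_prod_of_map_add hqp, qExpSubset, hqp]
    ac_rfl
  have hvχ : ∀ I, v (χE I) = qExpSubset n u I * v (qp 1) := fun I => by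
    have hvc : ∀ i, v (c i) = 0 := fun i => by simp only [c]; split_ifs <;> assumption
    rw [hχ, hv, hqval, map_prod_eq_sum_of_map_mul hv, sum_eq_zero fun i _ => hvc i, zero_add]
  have huniv : χE univ = a ^ (n - 1) * b := by
    rw [hχ, Fin.prod_ite_val_eq_sub_one hn, qExpSubset_univ, map_zero_eq_one_of_map_add hqp,
      mul_one]
  have hu_lt_one : u < 1 := hu1.trans_le (div_le_one_of_le₀ (by exact_mod_cast hn) (Nat.cast_nonneg n))
  refine ⟨fun I => ?_, ⟨huniv, ?_⟩, fun I hne hI => ?_⟩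
  · rw [hvχ]
    exact mul_nonneg (qExpSubset_nonneg hu0.le hu_lt_one.le I) hqpos.le
  · rw [← huniv, hvχ, qExpSubset_univ, zero_mul]
  · rw [hvχ]
    exact mul_pos (qExpSubset_pos hu0 hu_lt_one hne hI) hqpos
end
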